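/- Let n, m ≥ 1, let a₁, …, a_m be real numbers, and let u₁, …, u_m, v be independent random vectors in ℝⁿ, each distributed as the standard n-dimensional Gaussian N(0, I_n). Define ψ(x, y) = (xᵀy)²/n − (xᵀx)(yᵀy)/n². Then almost surely E[ ( Σ_{i=1}^{m} aᵢ ψ(uᵢ, v) )² | u₁, …, u_m ] = (2/n) Σ_{i=1}^{m} Σ_{k=1}^{m} aᵢ a_k ψ(uᵢ, u_k), where the conditioning is on the σ-algebra generated by (u₁, …, u_m). -/

import Mathlib

open MeasureTheory ProbabilityTheory Filter

/-- The standard Gaussian measure on `ℝⁿ`: the `n`-fold product of the standard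
Gaussian measure on `ℝ`. -/
noncomputable def stdGaussian (n : ℕ) : Measure (Fin n → ℝ) :=
  Measure.pi fun _ => gaussianReal 0 1

/-- `ψ(x, y) = (xᵀy)²/n − (xᵀx)(yᵀy)/n²`. -/
noncomputable def psi (n : ℕ) (x y : Fin n → ℝ) : ℝ :=
  (∑ i, x i * y i) ^ 2 / n - ((∑ i, x i * x i) * (∑ i, y i * y i)) / n ^ 2

/-!
Since `v` is independent of `u = (u₁, …, u_m)`, conditioning on `u` amounts to integrating over
`v` with `u` frozen. Expanding the square, it suffices that `E[ψ(x, v) ψ(z, v)] = (2/n) ψ(x, z)`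
for fixed `x, z`. As `vᵀv = Σₖ (eₖᵀv)²`, this product is a combination of terms
`(aᵀv)² (bᵀv)²`, whose means `|a|²|b|² + 2 (aᵀb)²` follow by polarization from
`E[(yᵀv)⁴] = 3 |y|⁴`, because `yᵀv` is a centred Gaussian of variance `|y|²`.
-/

open Real NNReal Matrix

open Polynomial in
lemma iteratedDeriv_four_exp_mul_sq_div_two (v : ℝ) :
    iteratedDeriv 4 (fun t => rexp (v * t ^ 2 / 2)) 0 = 3 * v ^ 2 := by
  have hderiv : ∀ p : ℝ[X], deriv (fun t => p.eval t * rexp (v * t ^ 2 / 2)) =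
      fun t => (derivative p + C v * X * p).eval t * rexp (v * t ^ 2 / 2) := by
    intro p
    ext t
    have hexp : HasDerivAt (fun t => rexp (v * t ^ 2 / 2)) (rexp (v * t ^ 2 / 2) * (v * t)) t := by
      have := ((hasDerivAt_pow 2 t).const_mul v).div_const 2
      convert this.exp using 1
      push_cast
      ring
    rw [((p.hasDerivAt t).fun_mul hexp).deriv]
    simp only [eval_add, eval_mul, eval_C, eval_X]
    ring
  have hone : (fun t => rexp (v * t ^ 2 / 2)) =
      fun t => (1 : ℝ[X]).eval t * rexp (v * t ^ 2 / 2) := by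
    simp
  simp only [iteratedDeriv_succ', iteratedDeriv_zero, hone, hderiv]
  simp [derivative_mul]
  ring

lemma integral_pow_four_gaussianReal (v : ℝ≥0) :
    ∫ x, x ^ 4 ∂gaussianReal 0 v = 3 * (v : ℝ) ^ 2 := by
  have h := iteratedDeriv_mgf_zero (X := fun x : ℝ => x) (μ := gaussianReal 0 v) (by simp) 4
  rw [mgf_fun_id_gaussianReal] at h
  simpa [iteratedDeriv_four_exp_mul_sq_div_two] using h.symm

section GaussianVector

variable {n : ℕ}

instance stdGaussian.isProbabilityMeasure : IsProbabilityMeasure (stdGaussian n) := by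
  unfold _root_.stdGaussian
  infer_instance

lemma dotProduct_self_nonneg_real (y : Fin n → ℝ) : 0 ≤ y ⬝ᵥ y := by
  simpa using dotProduct_star_self_nonneg y

lemma map_dotProduct_stdGaussian (y : Fin n → ℝ) :
    (stdGaussian n).map (y ⬝ᵥ ·) = gaussianReal 0 (y ⬝ᵥ y).toNNReal := by
  set L := innerSL ℝ (WithLp.toLp 2 y : EuclideanSpace ℝ (Fin n))
  have hL : (y ⬝ᵥ ·) = L ∘ WithLp.toLp 2 := by
    ext v
    simp [L, EuclideanSpace.inner_toLp_toLp, dotProduct_comm]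
  rw [hL, ← Measure.map_map (by fun_prop) (by fun_prop), _root_.stdGaussian, map_pi_eq_stdGaussian,
    IsGaussian.map_eq_gaussianReal, integral_strongDual_stdGaussian, variance_dual_stdGaussian,
    innerSL_apply_norm, EuclideanSpace.real_norm_sq_eq]
  simp [dotProduct, sq]

lemma integrable_pow_dotProduct (y : Fin n → ℝ) (k : ℕ) :
    Integrable (fun v => (y ⬝ᵥ v) ^ k) (stdGaussian n) := by
  have h := integrable_pow_of_mem_interior_integrableExpSet (X := fun x : ℝ => x)
    (μ := gaussianReal 0 (y ⬝ᵥ y).toNNReal) (by simp) k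
  rw [← map_dotProduct_stdGaussian, integrable_map_measure (by fun_prop) (by fun_prop)] at h
  exact h

lemma integral_pow_four_dotProduct (y : Fin n → ℝ) :
    ∫ v, (y ⬝ᵥ v) ^ 4 ∂stdGaussian n = 3 * (y ⬝ᵥ y) ^ 2 := by
  have h := integral_map (μ := stdGaussian n) (φ := (y ⬝ᵥ ·)) (f := (· ^ 4)) (by fun_prop)
    (by fun_prop)
  rw [map_dotProduct_stdGaussian, integral_pow_four_gaussianReal,
    Real.coe_toNNReal _ (dotProduct_self_nonneg_real y)] at h
  exact h.symm

lemma sq_dotProduct_mul_sq_dotProduct (x z v : Fin n → ℝ) :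
    (x ⬝ᵥ v) ^ 2 * (z ⬝ᵥ v) ^ 2 =
      (((x + z) ⬝ᵥ v) ^ 4 + ((x - z) ⬝ᵥ v) ^ 4 - 2 * (x ⬝ᵥ v) ^ 4 - 2 * (z ⬝ᵥ v) ^ 4) / 12 := by
  rw [add_dotProduct, sub_dotProduct]
  ring

lemma integrable_sq_dotProduct_mul_sq_dotProduct (x z : Fin n → ℝ) :
    Integrable (fun v => (x ⬝ᵥ v) ^ 2 * (z ⬝ᵥ v) ^ 2) (stdGaussian n) := by
  have h4 := (integrable_pow_dotProduct (n := n) · 4)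
  simp_rw [sq_dotProduct_mul_sq_dotProduct x z]
  fun_prop

lemma integral_sq_dotProduct_mul_sq_dotProduct (x z : Fin n → ℝ) :
    ∫ v, (x ⬝ᵥ v) ^ 2 * (z ⬝ᵥ v) ^ 2 ∂stdGaussian n = (x ⬝ᵥ x) * (z ⬝ᵥ z) + 2 * (x ⬝ᵥ z) ^ 2 := by
  have h4 := (integrable_pow_dotProduct (n := n) · 4)
  simp_rw [sq_dotProduct_mul_sq_dotProduct x z]
  rw [integral_div, integral_sub, integral_sub, integral_add, integral_const_mul,
    integral_const_mul]
  · simp only [integral_pow_four_dotProduct]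
    simp only [add_dotProduct, sub_dotProduct, dotProduct_add, dotProduct_sub, dotProduct_comm z x]
    ring
  all_goals fun_prop

lemma dotProduct_self_eq_sum_sq_single (v : Fin n → ℝ) :
    v ⬝ᵥ v = ∑ k, (Pi.single k 1 ⬝ᵥ v) ^ 2 := by
  simp only [single_one_dotProduct, sq]
  rfl

lemma dotProduct_self_sq_eq_sum (v : Fin n → ℝ) :
    (v ⬝ᵥ v) ^ 2 = ∑ k, (Pi.single k 1 ⬝ᵥ v) ^ 2 * (v ⬝ᵥ v) := by
  rw [sq]
  nth_rw 1 [dotProduct_self_eq_sum_sq_single]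
  rw [Finset.sum_mul]

lemma integrable_sq_dotProduct_mul_dotProduct_self (x : Fin n → ℝ) :
    Integrable (fun v => (x ⬝ᵥ v) ^ 2 * (v ⬝ᵥ v)) (stdGaussian n) := by
  simp_rw [dotProduct_self_eq_sum_sq_single, Finset.mul_sum]
  exact integrable_finsetSum _ fun k _ => integrable_sq_dotProduct_mul_sq_dotProduct x _

lemma integral_sq_dotProduct_mul_dotProduct_self (x : Fin n → ℝ) :
    ∫ v, (x ⬝ᵥ v) ^ 2 * (v ⬝ᵥ v) ∂stdGaussian n = (n + 2) * (x ⬝ᵥ x) := by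
  conv_lhs => enter [2, v]; rw [dotProduct_self_eq_sum_sq_single, Finset.mul_sum]
  rw [integral_finsetSum _ fun k _ => integrable_sq_dotProduct_mul_sq_dotProduct x _]
  simp only [integral_sq_dotProduct_mul_sq_dotProduct, dotProduct_single_one, Pi.single_eq_same,
    mul_one, Finset.sum_add_distrib, Finset.sum_const, ← Finset.mul_sum]
  simp [dotProduct, sq]
  ring

lemma integrable_dotProduct_self_sq :
    Integrable (fun v : Fin n → ℝ => (v ⬝ᵥ v) ^ 2) (stdGaussian n) := by
  simp_rw [dotProduct_self_sq_eq_sum]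
  exact integrable_finsetSum _ fun k _ => integrable_sq_dotProduct_mul_dotProduct_self _

lemma integral_dotProduct_self_sq :
    ∫ v, (v ⬝ᵥ v) ^ 2 ∂stdGaussian n = n * (n + 2) := by
  simp_rw [dotProduct_self_sq_eq_sum]
  rw [integral_finsetSum _ fun k _ => integrable_sq_dotProduct_mul_dotProduct_self _]
  simp only [integral_sq_dotProduct_mul_dotProduct_self]
  simp
  ring

end GaussianVector

section Psi

variable {n : ℕ}

lemma psi_eq_dotProduct (x y : Fin n → ℝ) :
    psi n x y = (x ⬝ᵥ y) ^ 2 / n - (x ⬝ᵥ x) * (y ⬝ᵥ y) / n ^ 2 :=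
  rfl

lemma psi_mul_psi_eq (x z v : Fin n → ℝ) :
    psi n x v * psi n z v =
      (x ⬝ᵥ v) ^ 2 * (z ⬝ᵥ v) ^ 2 / n ^ 2 - (z ⬝ᵥ z) / n ^ 3 * ((x ⬝ᵥ v) ^ 2 * (v ⬝ᵥ v))
        - (x ⬝ᵥ x) / n ^ 3 * ((z ⬝ᵥ v) ^ 2 * (v ⬝ᵥ v))
        + (x ⬝ᵥ x) * (z ⬝ᵥ z) / n ^ 4 * (v ⬝ᵥ v) ^ 2 := by
  rw [psi_eq_dotProduct, psi_eq_dotProduct]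
  ring

lemma integrable_psi_mul_psi (x z : Fin n → ℝ) :
    Integrable (fun v => psi n x v * psi n z v) (stdGaussian n) := by
  have hxz := integrable_sq_dotProduct_mul_sq_dotProduct x z
  have hx := integrable_sq_dotProduct_mul_dotProduct_self x
  have hz := integrable_sq_dotProduct_mul_dotProduct_self z
  have hv := integrable_dotProduct_self_sq (n := n)
  simp_rw [psi_mul_psi_eq x z]
  fun_prop

lemma integral_psi_mul_psi (x z : Fin n → ℝ) :
    ∫ v, psi n x v * psi n z v ∂stdGaussian n = 2 / n * psi n x z := by
  have hxz := integrable_sq_dotProduct_mul_sq_dotProduct x z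
  have hx := integrable_sq_dotProduct_mul_dotProduct_self x
  have hz := integrable_sq_dotProduct_mul_dotProduct_self z
  have hv := integrable_dotProduct_self_sq (n := n)
  simp_rw [psi_mul_psi_eq x z]
  rw [integral_add, integral_sub, integral_sub, integral_div, integral_const_mul,
    integral_const_mul, integral_const_mul]
  · rw [integral_sq_dotProduct_mul_sq_dotProduct, integral_sq_dotProduct_mul_dotProduct_self,
      integral_sq_dotProduct_mul_dotProduct_self, integral_dotProduct_self_sq, psi_eq_dotProduct]
    rcases eq_or_ne (n : ℝ) 0 with hn | hn
    · simp [hn]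
    · field_simp
      ring
  all_goals fun_prop

lemma integral_sq_sum_psi {m : ℕ} (a : Fin m → ℝ) (x : Fin m → Fin n → ℝ) :
    ∫ v, (∑ i, a i * psi n (x i) v) ^ 2 ∂stdGaussian n =
      2 / n * ∑ i, ∑ k, a i * a k * psi n (x i) (x k) := by
  have hsq : ∀ v, (∑ i, a i * psi n (x i) v) ^ 2 =
      ∑ i, ∑ k, a i * a k * (psi n (x i) v * psi n (x k) v) := fun v => by
    rw [sq, Finset.sum_mul_sum]
    exact Finset.sum_congr rfl fun i _ => Finset.sum_congr rfl fun k _ => by ring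
  simp_rw [hsq]
  rw [integral_finsetSum _ fun i _ => integrable_finsetSum _ fun k _ =>
    (integrable_psi_mul_psi _ _).const_mul _]
  simp_rw [Finset.mul_sum]
  refine Finset.sum_congr rfl fun i _ => ?_
  rw [integral_finsetSum _ fun k _ => (integrable_psi_mul_psi _ _).const_mul _]
  refine Finset.sum_congr rfl fun k _ => ?_
  rw [integral_const_mul, integral_psi_mul_psi]
  ring

lemma div_natCast_le_self {c : ℝ} (hc : 0 ≤ c) (k : ℕ) : c / k ≤ c := by
  rcases k.eq_zero_or_pos with rfl | hk
  · simpa using hc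
  · exact div_le_self hc (by exact_mod_cast hk)

lemma abs_psi_le (x y : Fin n → ℝ) : |psi n x y| ≤ (x ⬝ᵥ x) * (y ⬝ᵥ y) := by
  have hxx := dotProduct_self_nonneg_real x
  have hyy := dotProduct_self_nonneg_real y
  have hcs : (x ⬝ᵥ y) ^ 2 ≤ (x ⬝ᵥ x) * (y ⬝ᵥ y) := by
    simpa [sq, dotProduct] using Finset.sum_mul_sq_le_sq_mul_sq Finset.univ x y
  rw [psi_eq_dotProduct]
  refine abs_sub_le_of_nonneg_of_le (by positivity)
    ((div_natCast_le_self (sq_nonneg _) n).trans hcs) (by positivity) ?_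
  rw [← Nat.cast_pow]
  exact div_natCast_le_self (mul_nonneg hxx hyy) _

lemma integrable_sq_sum_psi {m : ℕ} (a : Fin m → ℝ) :
    Integrable (fun p : (Fin m → Fin n → ℝ) × (Fin n → ℝ) => (∑ i, a i * psi n (p.1 i) p.2) ^ 2)
      ((Measure.pi fun _ => stdGaussian n).prod (stdGaussian n)) := by
  have hbound : ∀ p : (Fin m → Fin n → ℝ) × (Fin n → ℝ), (∑ i, a i * psi n (p.1 i) p.2) ^ 2 ≤
      ∑ i, m * a i ^ 2 * (p.1 i ⬝ᵥ p.1 i) ^ 2 * (p.2 ⬝ᵥ p.2) ^ 2 := fun p => by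
    refine (sq_sum_le_card_mul_sum_sq ..).trans ?_
    simp only [Finset.card_univ, Fintype.card_fin, Finset.mul_sum]
    refine Finset.sum_le_sum fun i _ => ?_
    have hψ := abs_le.1 (abs_psi_le (p.1 i) p.2)
    calc (m : ℝ) * (a i * psi n (p.1 i) p.2) ^ 2 = m * a i ^ 2 * psi n (p.1 i) p.2 ^ 2 := by ring
      _ ≤ m * a i ^ 2 * ((p.1 i ⬝ᵥ p.1 i) * (p.2 ⬝ᵥ p.2)) ^ 2 :=
        mul_le_mul_of_nonneg_left (sq_le_sq' hψ.1 hψ.2) (by positivity)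
      _ = _ := by ring
  refine Integrable.mono'
    (g := fun p => ∑ i, m * a i ^ 2 * (p.1 i ⬝ᵥ p.1 i) ^ 2 * (p.2 ⬝ᵥ p.2) ^ 2)
    (integrable_finsetSum _ fun i _ => ?_) ?_ (ae_of_all _ fun p => ?_)
  · have hx : Integrable (fun x : Fin m → Fin n → ℝ => (x i ⬝ᵥ x i) ^ 2)
        (Measure.pi fun _ => stdGaussian n) :=
      (measurePreserving_eval (fun _ => stdGaussian n) i).integrable_comp_of_integrable
        integrable_dotProduct_self_sq
    exact (hx.const_mul _).mul_prod integrable_dotProduct_self_sq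
  · simp only [psi_eq_dotProduct]
    fun_prop
  · rw [Real.norm_of_nonneg (sq_nonneg _)]
    exact hbound p

end Psi

lemma condExp_comp_prodMk_ae_eq_integral_of_indepFun {Ω β γ : Type*} {mΩ : MeasurableSpace Ω}
    {μ : Measure Ω} [IsFiniteMeasure μ] {mβ : MeasurableSpace β} [MeasurableSpace γ]
    [StandardBorelSpace γ] [Nonempty γ] {X : Ω → β} {Y : Ω → γ} {f : β × γ → ℝ}
    (hX : Measurable X) (hY : Measurable Y) (hXY : IndepFun X Y μ)
    (hf : Integrable f ((μ.map X).prod (μ.map Y))) :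
    μ[fun ω => f (X ω, Y ω) | mβ.comap X] =ᵐ[μ] fun ω => ∫ y, f (X ω, y) ∂μ.map Y := by
  have hlaw : μ.map (fun ω => (X ω, Y ω)) = (μ.map X).prod (μ.map Y) :=
    (indepFun_iff_map_prod_eq_prod_map_map hX.aemeasurable hY.aemeasurable).1 hXY
  have hcond : condDistrib Y X μ =ᵐ[μ.map X] Kernel.const β (μ.map Y) :=
    condDistrib_ae_eq_of_measure_eq_compProd X hY.aemeasurable
      (by rw [hlaw, Measure.compProd_const])
  filter_upwards [condExp_prod_ae_eq_integral_condDistrib' hX hY.aemeasurable (hlaw ▸ hf),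
    ae_of_ae_map hX.aemeasurable hcond] with ω hω hωX
  rw [hω, hωX, Kernel.const_apply]

lemma ProbabilityTheory.iIndepFun.indepFun_snoc {Ω β : Type*} {mΩ : MeasurableSpace Ω}
    {μ : Measure Ω} [MeasurableSpace β] {m : ℕ} {f : Fin m → Ω → β} {g : Ω → β}
    (h : iIndepFun (Fin.snoc (α := fun _ => Ω → β) f g) μ) (hf : ∀ i, Measurable (f i))
    (hg : Measurable g) : IndepFun (fun ω i => f i ω) g μ := by
  have hmeas : ∀ p, Measurable (Fin.snoc (α := fun _ => Ω → β) f g p) :=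
    Fin.lastCases (by simpa using hg) fun i => by simpa using hf i
  have hdisj : Disjoint (Finset.univ.map Fin.castSuccEmb) {Fin.last m} := by
    simp [Fin.castSucc_ne_last]
  have := (h.indepFun_finset _ _ hdisj hmeas).comp
    (measurable_pi_lambda _ fun i => measurable_pi_apply
      ⟨Fin.castSucc i, Finset.mem_map_of_mem _ (Finset.mem_univ i)⟩)
    (measurable_pi_apply ⟨Fin.last m, Finset.mem_singleton_self _⟩)
  simpa [Function.comp_def] using this

theorem condexp_sq_weighted_sum_psi_general {Ω : Type*} [MeasurableSpace Ω] (μ : Measure Ω)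
    [IsProbabilityMeasure μ]
    (n m : ℕ)
    (a : Fin m → ℝ) (u : Fin m → Ω → (Fin n → ℝ)) (v : Ω → (Fin n → ℝ))
    (hu : ∀ i, Measurable (u i)) (hv : Measurable v)
    (hindep : iIndepFun
      (Fin.snoc (α := fun _ : Fin (m + 1) => Ω → (Fin n → ℝ)) u v) μ)
    (hud : ∀ i, Measure.map (u i) μ = stdGaussian n)
    (hvd : Measure.map v μ = stdGaussian n) :
    μ[(fun ω => (∑ i, a i * psi n (u i ω) (v ω)) ^ 2) |
        MeasurableSpace.comap (fun ω => fun i => u i ω) inferInstance]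
      =ᵐ[μ] fun ω => (2 / n) * ∑ i, ∑ k, a i * a k * psi n (u i ω) (u k ω) := by
  have hU : Measurable fun ω i => u i ω := measurable_pi_lambda _ hu
  have hlawU : μ.map (fun ω i => u i ω) = Measure.pi fun _ => stdGaussian n := by
    have hu_indep : iIndepFun u μ := by
      simpa using hindep.precomp (Fin.castSucc_injective m)
    rw [hu_indep.map_fun_eq_pi_map fun i => (hu i).aemeasurable]
    simp only [hud]
  have hF := integrable_sq_sum_psi (n := n) a
  rw [← hlawU, ← hvd] at hF
  refine (condExp_comp_prodMk_ae_eq_integral_of_indepFun hU hv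
    (hindep.indepFun_snoc hu hv) hF).trans (ae_of_all _ fun ω => ?_)
  rw [hvd]
  exact integral_sq_sum_psi a _

/-- If `u₁, …, u_m, v` are independent standard `n`-dimensional Gaussian vectors, then
almost surely `E[(Σᵢ aᵢ ψ(uᵢ, v))² | σ(u₁, …, u_m)] = (2/n) Σᵢ Σₖ aᵢ aₖ ψ(uᵢ, uₖ)`. -/
theorem condexp_sq_weighted_sum_psi {Ω : Type*} [MeasurableSpace Ω] (μ : Measure Ω)
    [IsProbabilityMeasure μ]
    (n m : ℕ) (hn : 1 ≤ n) (hm : 1 ≤ m)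
    (a : Fin m → ℝ) (u : Fin m → Ω → (Fin n → ℝ)) (v : Ω → (Fin n → ℝ))
    (hu : ∀ i, Measurable (u i)) (hv : Measurable v)
    (hindep : iIndepFun
      (Fin.snoc (α := fun _ : Fin (m + 1) => Ω → (Fin n → ℝ)) u v) μ)
    (hud : ∀ i, Measure.map (u i) μ = stdGaussian n)
    (hvd : Measure.map v μ = stdGaussian n) :
    μ[(fun ω => (∑ i, a i * psi n (u i ω) (v ω)) ^ 2) |
        MeasurableSpace.comap (fun ω => fun i => u i ω) inferInstance]
      =ᵐ[μ] fun ω => (2 / n) * ∑ i, ∑ k, a i * a k * psi n (u i ω) (u k ω) :=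
  condexp_sq_weighted_sum_psi_general μ n m a u v hu hv hindep hud hvd
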